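/- arXiv:2601.15970 — 2 statements merged into one kernel-verified Lean document; each statement's English description precedes it below -/
import Mathlib

section
/- Let E be a finite-dimensional real inner product space, let g : E → ℝ be differentiable and strongly convex with constant μ > 0 (i.e., g(y) ≥ g(x) + ⟪∇g(x), y - x⟫ + μ‖y - x‖² for all x, y), let h : E → ℝ be convex and differentiable, and set f = g - h. Suppose f(x) ≥ f_low for all x ∈ E for some f_low ∈ ℝ. Let (x_k)_{k≥0} be DCA iterates, i.e., for every k, x_{k+1} is a global minimizer of x ↦ g(x) - ⟪∇h(x_k), x - x_k⟫. Then the series ∑_{i=0}^{∞} ‖x_{i+1} - x_i‖² is summable, with ∑_{i=0}^{∞} ‖x_{i+1} - x_i‖² ≤ (f(x₀) - f_low)/μ; in particular ‖x_{k+1} - x_k‖ → 0 as k → ∞. -/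
open RealInnerProductSpace

/-! The optimality condition of the DCA subproblem reads `∇g(x_{k+1}) = ∇h(x_k)`. Combined with
strong convexity of `g` at `x_{k+1}` and convexity of `h` at `x_k`, it gives the sufficient
decrease `μ ‖x_{k+1} - x_k‖² ≤ f(x_k) - f(x_{k+1})`, and telescoping against `f_low` bounds every
partial sum of the squared steps by `(f(x₀) - f_low) / μ`. -/

theorem ConvexOn.add_fderiv_sub_le {F : Type*} [NormedAddCommGroup F] [NormedSpace ℝ F]
    {s : Set F} {f : F → ℝ} {f' : F →L[ℝ] ℝ} {a b : F} (hf : ConvexOn ℝ s f)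
    (ha : a ∈ s) (hb : b ∈ s) (hfa : HasFDerivAt f f' a) :
    f a + f' (b - a) ≤ f b := by
  set ℓ : ℝ →ᵃ[ℝ] F := AffineMap.lineMap a b
  have hconv : ConvexOn ℝ (Set.Icc 0 1) (f ∘ ℓ) :=
    (hf.comp_affineMap ℓ).subset
      (fun t ht => hf.1.lineMap_mem ha hb ⟨ht.1, ht.2⟩) (convex_Icc 0 1)
  have hderiv : HasDerivAt (f ∘ ℓ) (f' (b - a)) 0 :=
    (by simpa [ℓ] using hfa : HasFDerivAt f f' (ℓ 0)).comp_hasDerivAt 0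
      AffineMap.hasDerivAt_lineMap
  have := hconv.le_slope_of_hasDerivAt (by simp) (by simp) zero_lt_one hderiv
  simp only [slope_def_field, Function.comp_apply, ℓ, AffineMap.lineMap_apply_zero,
    AffineMap.lineMap_apply_one, sub_zero, div_one] at this
  linarith

section DCA

variable {E : Type*} [NormedAddCommGroup E] [InnerProductSpace ℝ E] [CompleteSpace E]

theorem IsLocalMin.gradient_eq_of_sub_inner {g : E → ℝ} {v a b : E}
    (hmin : IsLocalMin (fun y => g y - ⟪v, y - a⟫) b) (hg : DifferentiableAt ℝ g b) :
    gradient g b = v := by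
  have hlin : HasFDerivAt (fun y => ⟪v, y - a⟫) (InnerProductSpace.toDual ℝ E v) b :=
    (InnerProductSpace.toDual ℝ E v).hasFDerivAt.comp b ((hasFDerivAt_id b).sub_const a)
  have hzero := hmin.hasFDerivAt_eq_zero (hg.hasFDerivAt.sub hlin)
  simp [gradient, sub_eq_zero.mp hzero]

theorem sq_norm_sub_le_of_gradient_eq {g h : E → ℝ} {μ : ℝ}
    (hsc : ∀ x y : E, g y ≥ g x + ⟪gradient g x, y - x⟫ + μ * ‖y - x‖ ^ 2)
    {a b : E} (hh : DifferentiableAt ℝ h a) (hconv : ConvexOn ℝ Set.univ h)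
    (hgrad : gradient g b = gradient h a) :
    μ * ‖b - a‖ ^ 2 ≤ (g a - h a) - (g b - h b) := by
  have hg_above := hsc b a
  have hh_above := hconv.add_fderiv_sub_le (Set.mem_univ a) (Set.mem_univ b) hh.hasGradientAt
  rw [hgrad, norm_sub_rev, ← neg_sub b a, inner_neg_right] at hg_above
  rw [InnerProductSpace.toDual_apply_apply] at hh_above
  linarith

end DCA

theorem sum_range_le_div_of_descent {u F : ℕ → ℝ} {μ flow : ℝ} (hμ : 0 < μ)
    (hdesc : ∀ k, μ * u k ≤ F k - F (k + 1)) (hflow : ∀ k, flow ≤ F k) (n : ℕ) :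
    ∑ i ∈ Finset.range n, u i ≤ (F 0 - flow) / μ := by
  rw [le_div_iff₀ hμ, Finset.sum_mul]
  calc ∑ i ∈ Finset.range n, u i * μ
      ≤ ∑ i ∈ Finset.range n, (F i - F (i + 1)) :=
        Finset.sum_le_sum fun i _ => by linarith [hdesc i]
    _ = F 0 - F n := Finset.sum_range_sub' F n
    _ ≤ F 0 - flow := by linarith [hflow n]

/-- For DCA iterates of a lower-bounded objective `f = g - h` with `g`
`μ`-strongly convex, the squared step lengths are summable with sum at most
`(f x₀ - f_low) / μ`; in particular the step lengths tend to zero. -/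
theorem dca_steps_square_summable
    {E : Type*} [NormedAddCommGroup E] [InnerProductSpace ℝ E] [FiniteDimensional ℝ E]
    (g h : E → ℝ) (μ : ℝ) (hμ : 0 < μ)
    (hg : Differentiable ℝ g)
    (hsc : ∀ x y : E, g y ≥ g x + ⟪gradient g x, y - x⟫ + μ * ‖y - x‖ ^ 2)
    (hh : Differentiable ℝ h) (hconv : ConvexOn ℝ Set.univ h)
    (flow : ℝ) (hflow : ∀ x : E, g x - h x ≥ flow)
    (x : ℕ → E)
    (hmin : ∀ k : ℕ, ∀ y : E,
      g (x (k + 1)) - ⟪gradient h (x k), x (k + 1) - x k⟫ ≤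
        g y - ⟪gradient h (x k), y - x k⟫) :
    Summable (fun i : ℕ => ‖x (i + 1) - x i‖ ^ 2) ∧
    (∑' i : ℕ, ‖x (i + 1) - x i‖ ^ 2) ≤ ((g (x 0) - h (x 0)) - flow) / μ ∧
    Filter.Tendsto (fun k : ℕ => ‖x (k + 1) - x k‖) Filter.atTop (nhds 0) := by
  have hgrad (k : ℕ) : gradient g (x (k + 1)) = gradient h (x k) :=
    IsLocalMin.gradient_eq_of_sub_inner
      (IsMinOn.isLocalMin (fun y _ => hmin k y) Filter.univ_mem) (hg _)
  have hbound := sum_range_le_div_of_descent (F := fun k => g (x k) - h (x k)) hμ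
    (fun k => sq_norm_sub_le_of_gradient_eq hsc (hh _) hconv (hgrad k)) (fun k => hflow _)
  have hnonneg (i : ℕ) : 0 ≤ ‖x (i + 1) - x i‖ ^ 2 := sq_nonneg _
  have hsum := summable_of_sum_range_le hnonneg hbound
  refine ⟨hsum, Real.tsum_le_of_sum_range_le hnonneg hbound, ?_⟩
  simpa [Real.sqrt_sq (norm_nonneg _)] using hsum.tendsto_atTop_zero.sqrt
end

section
/- Let E be a finite-dimensional real inner product space, let g : E → ℝ be differentiable and strongly convex with constant μ > 0 (i.e., g(y) ≥ g(x) + ⟪∇g(x), y - x⟫ + μ‖y - x‖² for all x, y), let h : E → ℝ be convex and differentiable with ∇h Lipschitz continuous with constant L_h, and set f = g - h. Suppose f(x) ≥ f_low for all x ∈ E for some f_low ∈ ℝ. Let (x_k)_{k≥0} be DCA iterates, i.e., for every k, x_{k+1} is a global minimizer of x ↦ g(x) - ⟪∇h(x_k), x - x_k⟫. Then the averaged squared gradient norms over the last half of the iterations converge to zero faster than 1/k: k · (1/(⌊k/2⌋ + 1)) ∑_{i=⌈k/2⌉}^{k} ‖∇f(x_i)‖² → 0 as k → ∞. -/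
/-!
Optimality of `x (k + 1)` for the convex surrogate gives `∇g (x (k + 1)) = ∇h (x k)`. Combined
with strong convexity of `g` and convexity of `h` this yields the sufficient decrease
`μ ‖x (k + 1) - x k‖² ≤ f (x k) - f (x (k + 1))`, while the Lipschitz bound on `∇h` gives
`‖∇f (x (k + 1))‖ = ‖∇h (x k) - ∇h (x (k + 1))‖ ≤ L ‖x (k + 1) - x k‖`. Hence the squared gradient
norms over the window `⌈k/2⌉, …, k` sum to at most `L²/μ` times the decrease of `f` over that window,
which tends to zero because `f (x k)` is nonincreasing and bounded below; the window has about `k/2`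
terms, so `k` times their average tends to zero.
-/

open RealInnerProductSpace Filter Topology Finset

theorem Finset.sum_Ioc_le_mul_sub {a b : ℕ → ℝ} {C : ℝ}
    (hab : ∀ i, b (i + 1) ≤ C * (a i - a (i + 1))) {n k : ℕ} (hnk : n ≤ k) :
    ∑ i ∈ Ioc n k, b i ≤ C * (a n - a k) := by
  induction k, hnk using Nat.le_induction with
  | base => simp
  | succ k hnk ih =>
    rw [sum_Ioc_succ_top hnk]
    linarith [hab k]

theorem tendsto_nat_mul_average_sum_Icc_half {a b : ℕ → ℝ} {C : ℝ}
    (ha : Antitone a) (ha' : BddBelow (Set.range a)) (hb : ∀ i, 0 ≤ b i)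
    (hab : ∀ i, b (i + 1) ≤ C * (a i - a (i + 1))) :
    Tendsto (fun k : ℕ => (k : ℝ) * ((1 / ((k / 2 : ℕ) + 1 : ℝ)) * ∑ i ∈ Icc ((k + 1) / 2) k, b i))
      atTop (𝓝 0) := by
  have hlim : Tendsto a atTop (𝓝 (⨅ n, a n)) := tendsto_atTop_ciInf ha ha'
  have hidx : Tendsto (fun k : ℕ => (k + 1) / 2 - 1) atTop atTop :=
    tendsto_atTop_atTop.mpr fun n => ⟨2 * n + 2, fun k hk => by omega⟩
  have hbound : Tendsto (fun k : ℕ => 2 * C * (a ((k + 1) / 2 - 1) - a k)) atTop (𝓝 0) := by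
    simpa using ((hlim.comp hidx).sub hlim).const_mul (2 * C)
  refine squeeze_zero' (Eventually.of_forall fun k => ?_) ?_ hbound
  · have := sum_nonneg fun i (_ : i ∈ Icc ((k + 1) / 2) k) => hb i
    positivity
  filter_upwards [eventually_ge_atTop 1] with k hk
  have hsum : ∑ i ∈ Icc ((k + 1) / 2) k, b i ≤ C * (a ((k + 1) / 2 - 1) - a k) := by
    rw [← Nat.sub_add_cancel (show 1 ≤ (k + 1) / 2 by omega), Icc_add_one_left_eq_Ioc,
      Nat.add_sub_cancel]
    exact sum_Ioc_le_mul_sub hab (by omega)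
  have hratio : (k : ℝ) * (1 / ((k / 2 : ℕ) + 1 : ℝ)) ≤ 2 := by
    rw [mul_one_div, div_le_iff₀ (by positivity)]
    have : k ≤ 2 * (k / 2) + 2 := by omega
    exact_mod_cast this
  calc (k : ℝ) * ((1 / ((k / 2 : ℕ) + 1 : ℝ)) * ∑ i ∈ Icc ((k + 1) / 2) k, b i)
      = (k : ℝ) * (1 / ((k / 2 : ℕ) + 1 : ℝ)) * ∑ i ∈ Icc ((k + 1) / 2) k, b i := by ring
    _ ≤ 2 * (C * (a ((k + 1) / 2 - 1) - a k)) :=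
      mul_le_mul hratio hsum (sum_nonneg fun i _ => hb i) zero_le_two
    _ = 2 * C * (a ((k + 1) / 2 - 1) - a k) := by ring

section InnerProductSpace

variable {E : Type*} [NormedAddCommGroup E] [InnerProductSpace ℝ E] [CompleteSpace E]

theorem HasGradientAt.sub {f g : E → ℝ} {f' g' x : E} (hf : HasGradientAt f f' x)
    (hg : HasGradientAt g g' x) : HasGradientAt (fun y => f y - g y) (f' - g') x := by
  rw [hasGradientAt_iff_hasFDerivAt, map_sub]
  exact hf.hasFDerivAt.sub hg.hasFDerivAt

theorem hasGradientAt_inner_sub_const (c x₀ z : E) :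
    HasGradientAt (fun y : E => ⟪c, y - x₀⟫) c z := by
  rw [hasGradientAt_iff_hasFDerivAt]
  simpa [inner_sub_right] using ((InnerProductSpace.toDual ℝ E c).hasFDerivAt (x := z)).sub_const
    ⟪c, x₀⟫

theorem IsLocalMin.hasGradientAt_eq_zero {f : E → ℝ} {f' x : E} (hmin : IsLocalMin f x)
    (hf : HasGradientAt f f' x) : f' = 0 := by
  simpa using hmin.hasFDerivAt_eq_zero hf.hasFDerivAt

theorem ConvexOn.add_inner_gradient_le {f : E → ℝ} (hf : ConvexOn ℝ Set.univ f) {a : E}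
    (hfa : DifferentiableAt ℝ f a) (b : E) : f a + ⟪gradient f a, b - a⟫ ≤ f b := by
  let γ : ℝ →ᵃ[ℝ] E := AffineMap.lineMap a b
  have hγ : HasDerivAt (fun t : ℝ => γ t) (b - a) 0 := by
    simpa [γ, AffineMap.lineMap_apply_module'] using
      ((hasDerivAt_id (0 : ℝ)).smul_const (b - a)).add_const a
  have hfγ : HasDerivAt (f ∘ γ) ⟪gradient f a, b - a⟫ 0 := by
    have hfa' : HasFDerivAt f (fderiv ℝ f a) (γ 0) := by
      rw [show γ 0 = a by simp [γ]]
      exact hfa.hasFDerivAt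
    rw [inner_gradient_left]
    exact hfa'.comp_hasDerivAt 0 hγ
  have hslope := (hf.comp_affineMap γ).le_slope_of_hasDerivAt (Set.mem_univ 0)
    (Set.mem_univ 1) one_pos hfγ
  simp only [slope_def_field, Function.comp_apply, γ, AffineMap.lineMap_apply_zero,
    AffineMap.lineMap_apply_one, sub_zero, div_one] at hslope
  linarith

def IsDCASequence (g h : E → ℝ) (x : ℕ → E) : Prop :=
  ∀ k y, g (x (k + 1)) - ⟪gradient h (x k), x (k + 1) - x k⟫ ≤ g y - ⟪gradient h (x k), y - x k⟫

namespace IsDCASequence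

variable {g h : E → ℝ} {x : ℕ → E}

theorem gradient_succ (hx : IsDCASequence g h x) {k : ℕ} (hg : DifferentiableAt ℝ g (x (k + 1))) :
    gradient g (x (k + 1)) = gradient h (x k) := by
  have hmin : IsLocalMin (fun y => g y - ⟪gradient h (x k), y - x k⟫) (x (k + 1)) :=
    Eventually.of_forall (hx k)
  exact sub_eq_zero.mp <|
    hmin.hasGradientAt_eq_zero (hg.hasGradientAt.sub (hasGradientAt_inner_sub_const _ _ _))

theorem sq_norm_sub_le {μ : ℝ} (hx : IsDCASequence g h x) (hg : Differentiable ℝ g)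
    (hsc : ∀ x y : E, g y ≥ g x + ⟪gradient g x, y - x⟫ + μ * ‖y - x‖ ^ 2)
    (hh : Differentiable ℝ h) (hconv : ConvexOn ℝ Set.univ h) (k : ℕ) :
    μ * ‖x (k + 1) - x k‖ ^ 2 ≤ (g (x k) - h (x k)) - (g (x (k + 1)) - h (x (k + 1))) := by
  have hg_lower := hsc (x (k + 1)) (x k)
  have hh_lower := hconv.add_inner_gradient_le (hh (x k)) (x (k + 1))
  rw [hx.gradient_succ (hg _), norm_sub_rev, ← neg_sub, inner_neg_right] at hg_lower
  linarith

theorem antitone {μ : ℝ} (hμ : 0 ≤ μ) (hx : IsDCASequence g h x) (hg : Differentiable ℝ g)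
    (hsc : ∀ x y : E, g y ≥ g x + ⟪gradient g x, y - x⟫ + μ * ‖y - x‖ ^ 2)
    (hh : Differentiable ℝ h) (hconv : ConvexOn ℝ Set.univ h) :
    Antitone fun k => g (x k) - h (x k) :=
  antitone_nat_of_succ_le fun k => by
    nlinarith [hx.sq_norm_sub_le hg hsc hh hconv k, sq_nonneg ‖x (k + 1) - x k‖]

theorem sq_norm_gradient_succ_le {μ L : ℝ} (hμ : 0 < μ) (hx : IsDCASequence g h x)
    (hg : Differentiable ℝ g)
    (hsc : ∀ x y : E, g y ≥ g x + ⟪gradient g x, y - x⟫ + μ * ‖y - x‖ ^ 2)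
    (hh : Differentiable ℝ h) (hconv : ConvexOn ℝ Set.univ h)
    (hlip : ∀ x y : E, ‖gradient h x - gradient h y‖ ≤ L * ‖x - y‖) (k : ℕ) :
    ‖gradient (fun y => g y - h y) (x (k + 1))‖ ^ 2 ≤
      L ^ 2 / μ * ((g (x k) - h (x k)) - (g (x (k + 1)) - h (x (k + 1)))) := by
  have hgrad : ‖gradient (fun y => g y - h y) (x (k + 1))‖ ≤ L * ‖x (k + 1) - x k‖ := by
    rw [((hg _).hasGradientAt.sub (hh _).hasGradientAt).gradient, hx.gradient_succ (hg _),
      norm_sub_rev (x _)]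
    exact hlip _ _
  have hdesc := hx.sq_norm_sub_le hg hsc hh hconv k
  rw [div_mul_eq_mul_div, le_div_iff₀ hμ]
  calc ‖gradient (fun y => g y - h y) (x (k + 1))‖ ^ 2 * μ
      ≤ (L * ‖x (k + 1) - x k‖) ^ 2 * μ := by gcongr
    _ = L ^ 2 * (μ * ‖x (k + 1) - x k‖ ^ 2) := by ring
    _ ≤ L ^ 2 * ((g (x k) - h (x k)) - (g (x (k + 1)) - h (x (k + 1)))) := by gcongr

end IsDCASequence

end InnerProductSpace

/-- `o(1/k)` rate: the averaged squared gradient norms over the last half of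
the DCA iterations, multiplied by `k`, tend to zero. -/
theorem dca_average_grad_sq_little_o
    {E : Type*} [NormedAddCommGroup E] [InnerProductSpace ℝ E] [FiniteDimensional ℝ E]
    (g h : E → ℝ) (μ L : ℝ) (hμ : 0 < μ)
    (hg : Differentiable ℝ g)
    (hsc : ∀ x y : E, g y ≥ g x + ⟪gradient g x, y - x⟫ + μ * ‖y - x‖ ^ 2)
    (hh : Differentiable ℝ h) (hconv : ConvexOn ℝ Set.univ h)
    (hlip : ∀ x y : E, ‖gradient h x - gradient h y‖ ≤ L * ‖x - y‖)
    (flow : ℝ) (hflow : ∀ x : E, g x - h x ≥ flow)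
    (x : ℕ → E)
    (hmin : ∀ k : ℕ, ∀ y : E,
      g (x (k + 1)) - ⟪gradient h (x k), x (k + 1) - x k⟫ ≤
        g y - ⟪gradient h (x k), y - x k⟫) :
    Filter.Tendsto
      (fun k : ℕ => (k : ℝ) *
        ((1 / ((k / 2 : ℕ) + 1 : ℝ)) *
          ∑ i ∈ Finset.Icc ((k + 1) / 2) k, ‖gradient (fun y => g y - h y) (x i)‖ ^ 2))
      Filter.atTop (nhds 0) := by
  have hdca : IsDCASequence g h x := hmin
  exact tendsto_nat_mul_average_sum_Icc_half (hdca.antitone hμ.le hg hsc hh hconv)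
    ⟨flow, by rintro _ ⟨k, rfl⟩; exact hflow (x k)⟩ (fun _ => sq_nonneg _)
    (hdca.sq_norm_gradient_succ_le hμ hg hsc hh hconv hlip)
end
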